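/- KKT characterization for norm-ball constraints: a point x is a KKT point of min_{‖x‖ ≤ 1/λ} L(x) (i.e., there exists s* ≥ 0 with ‖x‖ ≤ 1/λ, 0 ∈ ∇L(x) + s*∂‖·‖(x), and s*(‖x‖ − 1/λ) = 0) if and only if ‖x‖ ≤ 1/λ and ⟨−λx, ∇L(x)⟩ = ‖∇L(x)‖_*. -/

import Mathlib

open scoped RealInnerProductSpace BigOperators
open Filter Finset

/-- `N` is a norm on `ℝ^d`. -/
def IsNorm {d : ℕ} (N : EuclideanSpace ℝ (Fin d) → ℝ) : Prop :=
  (∀ x, N x = 0 ↔ x = 0) ∧ (∀ (c : ℝ) (x), N (c • x) = |c| * N x) ∧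
    (∀ x y, N (x + y) ≤ N x + N y)

/-- `D` is the dual norm of `N`: `D g` is the maximum of `⟪g, x⟫` over the unit ball of `N`
(the supremum is attained in finite dimension). -/
def IsDualNorm {d : ℕ} (N D : EuclideanSpace ℝ (Fin d) → ℝ) : Prop :=
  ∀ g, IsGreatest {r : ℝ | ∃ x, N x ≤ 1 ∧ r = ⟪g, x⟫} (D g)

/-- `g` is a subgradient of the convex function `f` at `x`. -/
def SubgradientAt {d : ℕ} (f : EuclideanSpace ℝ (Fin d) → ℝ)
    (x g : EuclideanSpace ℝ (Fin d)) : Prop :=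
  ∀ y, f x + ⟪y - x, g⟫ ≤ f y

/-!
A vector `u` is a subgradient of the norm `N` at `x` exactly when it lies in the dual unit ball
(`⟪y, u⟫ ≤ N y` for all `y`) and `⟪x, u⟫ = N x`. Write `g = ∇L(x)`.

If `(s, u)` is a KKT pair, then `g = -s u`, so `⟪g, y⟫ ≤ s` on the unit ball of `N`, with equality
at `y = -λx` by complementary slackness; hence `‖g‖_* = s = ⟪-λx, g⟫`.

Conversely, suppose `-λx` attains `M = ‖g‖_*`. If `M > 0`, then `u = -g / M` lies in the dual unit
ball and `⟪x, u⟫ = 1/λ ≥ N x`, which forces `N x = 1/λ`; so `(M, u)` is a KKT pair. If `M = 0`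
then `g = 0`, and `s = 0` works together with any subgradient of `N` at `x`; one exists by
Hahn–Banach.
-/

namespace IsNorm

variable {d : ℕ} {N : EuclideanSpace ℝ (Fin d) → ℝ}

theorem map_zero (hN : IsNorm N) : N 0 = 0 := (hN.1 0).2 rfl

theorem map_neg (hN : IsNorm N) (y : EuclideanSpace ℝ (Fin d)) : N (-y) = N y := by
  simpa using hN.2.1 (-1) y

theorem nonneg (hN : IsNorm N) (y : EuclideanSpace ℝ (Fin d)) : 0 ≤ N y := by
  have h := hN.2.2 y (-y)
  rw [add_neg_cancel, hN.map_zero, hN.map_neg] at h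
  linarith

theorem subgradientAt_iff (hN : IsNorm N) {x u : EuclideanSpace ℝ (Fin d)} :
    SubgradientAt N x u ↔ (∀ y, ⟪y, u⟫ ≤ N y) ∧ ⟪x, u⟫ = N x := by
  constructor
  · intro hu
    have hxu : ⟪x, u⟫ = N x := by
      have h0 := hu 0
      have h2 := hu ((2 : ℝ) • x)
      rw [hN.map_zero, zero_sub, inner_neg_left] at h0
      rw [show (2 : ℝ) • x - x = x by module, hN.2.1, abs_two] at h2
      linarith
    refine ⟨fun y => ?_, hxu⟩
    have h := hu y
    rw [inner_sub_left, hxu] at h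
    linarith
  · rintro ⟨hle, hxu⟩ y
    rw [inner_sub_left, hxu]
    linarith [hle y]

theorem exists_subgradientAt (hN : IsNorm N) (x : EuclideanSpace ℝ (Fin d)) :
    ∃ u, SubgradientAt N x u := by
  have hspan : ∀ c : ℝ, c • x = 0 → c • N x = 0 := fun c hc => by
    have h := hN.2.1 c x
    rw [hc, hN.map_zero, eq_comm, mul_eq_zero, abs_eq_zero] at h
    rcases h with h | h <;> simp [h]
  obtain ⟨g, hg_ext, hg_le⟩ :=
    exists_extension_of_le_sublinear (LinearPMap.mkSpanSingleton' x (N x) hspan) N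
      (fun c hc y => by rw [hN.2.1, abs_of_pos hc]) hN.2.2 (by
        rintro ⟨_, hz⟩
        obtain ⟨c, rfl⟩ := Submodule.mem_span_singleton.1 hz
        rw [LinearPMap.mkSpanSingleton'_apply, hN.2.1, smul_eq_mul]
        exact mul_le_mul_of_nonneg_right (le_abs_self c) (hN.nonneg x))
  have hgx : g x = N x :=
    (hg_ext ⟨x, Submodule.mem_span_singleton_self x⟩).trans
      (LinearPMap.mkSpanSingleton'_apply_self _ _ _ _)
  set u := (InnerProductSpace.toDual ℝ _).symm (LinearMap.toContinuousLinearMap g)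
  have hu : ∀ y, ⟪y, u⟫ = g y := fun y => by
    rw [real_inner_comm, InnerProductSpace.toDual_symm_apply]
    rfl
  exact ⟨u, hN.subgradientAt_iff.2 ⟨fun y => (hu y).trans_le (hg_le y), (hu x).trans hgx⟩⟩

end IsNorm

namespace IsDualNorm

variable {d : ℕ} {N D : EuclideanSpace ℝ (Fin d) → ℝ}

theorem nonneg (hN : IsNorm N) (hD : IsDualNorm N D) (g : EuclideanSpace ℝ (Fin d)) :
    0 ≤ D g :=
  (hD g).2 ⟨0, by rw [hN.map_zero]; exact zero_le_one, by rw [inner_zero_right]⟩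

theorem inner_le_mul (hN : IsNorm N) (hD : IsDualNorm N D) (g y : EuclideanSpace ℝ (Fin d)) :
    ⟪g, y⟫ ≤ D g * N y := by
  rcases (hN.nonneg y).eq_or_lt with hy | hy
  · rw [(hN.1 y).1 hy.symm, inner_zero_right, hN.map_zero, mul_zero]
  · have hball : N ((N y)⁻¹ • y) ≤ 1 := by
      rw [hN.2.1, abs_inv, abs_of_pos hy, inv_mul_cancel₀ hy.ne']
    have h := (hD g).2 ⟨_, hball, rfl⟩
    rw [real_inner_smul_right, inv_mul_le_iff₀ hy] at h
    linarith

theorem inner_inv_smul_le (hN : IsNorm N) (hD : IsDualNorm N D) (g y : EuclideanSpace ℝ (Fin d)) :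
    ⟪y, (D g)⁻¹ • g⟫ ≤ N y := by
  rw [real_inner_smul_right, real_inner_comm]
  rcases (hD.nonneg hN g).eq_or_lt with h | h
  · rw [← h, inv_zero, zero_mul]
    exact hN.nonneg y
  · rw [inv_mul_le_iff₀ h]
    exact hD.inner_le_mul hN g y

theorem eq_zero_of_apply_eq_zero (hN : IsNorm N) (hD : IsDualNorm N D)
    {g : EuclideanSpace ℝ (Fin d)} (h : D g = 0) : g = 0 := by
  have hgg := hD.inner_le_mul hN g g
  rw [h, zero_mul] at hgg
  exact real_inner_self_nonpos.1 hgg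

theorem apply_eq_inner (hD : IsDualNorm N D) {g z : EuclideanSpace ℝ (Fin d)} (hz : N z ≤ 1)
    (hmax : ∀ y, N y ≤ 1 → ⟪g, y⟫ ≤ ⟪g, z⟫) : D g = ⟪g, z⟫ :=
  (hD g).unique ⟨⟨z, hz, rfl⟩, by rintro _ ⟨y, hy, rfl⟩; exact hmax y hy⟩

end IsDualNorm

section NormBallKKT

variable {d : ℕ} {N D : EuclideanSpace ℝ (Fin d) → ℝ} {lam : ℝ} {x g : EuclideanSpace ℝ (Fin d)}

theorem inner_neg_smul_eq_dualNorm_of_kkt (hN : IsNorm N) (hD : IsDualNorm N D) (hlam : 0 < lam)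
    {s : ℝ} {u : EuclideanSpace ℝ (Fin d)} (hs : 0 ≤ s) (hx : N x ≤ 1 / lam)
    (hu : SubgradientAt N x u) (hgu : g + s • u = 0) (hslack : s * (N x - 1 / lam) = 0) :
    ⟪-(lam • x), g⟫ = D g := by
  obtain ⟨hu_le, hxu⟩ := hN.subgradientAt_iff.1 hu
  have hinner : ∀ y, ⟪g, y⟫ = s * ⟪-y, u⟫ := fun y => by
    rw [eq_neg_of_add_eq_zero_left hgu, inner_neg_left, real_inner_smul_left, inner_neg_left,
      real_inner_comm]
    ring
  have hval : ⟪g, -(lam • x)⟫ = s := by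
    rw [hinner, neg_neg, real_inner_smul_left, hxu]
    field_simp at hslack
    linear_combination hslack
  have hball : N (-(lam • x)) ≤ 1 := by
    rw [hN.map_neg, hN.2.1, abs_of_pos hlam]
    exact (le_div_iff₀' hlam).1 hx
  have hmax : ∀ y, N y ≤ 1 → ⟪g, y⟫ ≤ ⟪g, -(lam • x)⟫ := fun y hy =>
    calc ⟪g, y⟫ = s * ⟪-y, u⟫ := hinner y
      _ ≤ s * N y := by rw [← hN.map_neg y]; exact mul_le_mul_of_nonneg_left (hu_le _) hs
      _ ≤ s := mul_le_of_le_one_right hs hy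
      _ = ⟪g, -(lam • x)⟫ := hval.symm
  rw [real_inner_comm, hD.apply_eq_inner hball hmax]

theorem exists_kkt_of_inner_neg_smul_eq_dualNorm (hN : IsNorm N) (hD : IsDualNorm N D)
    (hlam : 0 < lam) (hx : N x ≤ 1 / lam) (hval : ⟪-(lam • x), g⟫ = D g) :
    ∃ s : ℝ, 0 ≤ s ∧ (∃ u, SubgradientAt N x u ∧ g + s • u = 0) ∧ s * (N x - 1 / lam) = 0 := by
  rcases (hD.nonneg hN g).eq_or_lt with hM | hM
  · obtain ⟨u, hu⟩ := hN.exists_subgradientAt x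
    refine ⟨0, le_rfl, ⟨u, hu, ?_⟩, zero_mul _⟩
    rw [hD.eq_zero_of_apply_eq_zero hN hM.symm, zero_smul, add_zero]
  · set u := -((D g)⁻¹ • g)
    have hu_le : ∀ y, ⟪y, u⟫ ≤ N y := fun y => by
      rw [inner_neg_right, ← inner_neg_left, ← hN.map_neg y]
      exact hD.inner_inv_smul_le hN g (-y)
    have hxu : ⟪x, u⟫ = 1 / lam := by
      rw [inner_neg_left, real_inner_smul_left] at hval
      rw [inner_neg_right, real_inner_smul_right]
      field_simp
      linear_combination hval
    have hNx : N x = 1 / lam := le_antisymm hx (hxu ▸ hu_le x)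
    refine ⟨D g, hM.le, ⟨u, hN.subgradientAt_iff.2 ⟨hu_le, hxu.trans hNx.symm⟩, ?_⟩,
      by rw [hNx, sub_self, mul_zero]⟩
    rw [smul_neg, smul_smul, mul_inv_cancel₀ hM.ne', one_smul, add_neg_cancel]

end NormBallKKT

theorem kkt_iff_general {d : ℕ} (N D : EuclideanSpace ℝ (Fin d) → ℝ)
    (hN : IsNorm N) (hD : IsDualNorm N D) (lam : ℝ) (hlam : 0 < lam)
    (G : EuclideanSpace ℝ (Fin d) → EuclideanSpace ℝ (Fin d))
    (x : EuclideanSpace ℝ (Fin d)) :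
    (∃ s : ℝ, 0 ≤ s ∧ N x ≤ 1 / lam ∧
        (∃ u, SubgradientAt N x u ∧ G x + s • u = 0) ∧ s * (N x - 1 / lam) = 0) ↔
      (N x ≤ 1 / lam ∧ ⟪-(lam • x), G x⟫ = D (G x)) := by
  constructor
  · rintro ⟨s, hs, hx, ⟨u, hu, hgu⟩, hslack⟩
    exact ⟨hx, inner_neg_smul_eq_dualNorm_of_kkt hN hD hlam hs hx hu hgu hslack⟩
  · rintro ⟨hx, hval⟩
    obtain ⟨s, hs, hsub, hslack⟩ := exists_kkt_of_inner_neg_smul_eq_dualNorm hN hD hlam hx hval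
    exact ⟨s, hs, hx, hsub, hslack⟩

/-- KKT characterization for norm-ball constraints. `x` is a KKT point of
`min_{N x ≤ 1/λ} L(x)` iff `N x ≤ 1/λ` and `⟪-λ x, ∇L(x)⟫ = ‖∇L(x)‖_*`. -/
theorem kkt_iff {d : ℕ} (N D : EuclideanSpace ℝ (Fin d) → ℝ)
    (hN : IsNorm N) (hD : IsDualNorm N D) (lam : ℝ) (hlam : 0 < lam)
    (L : EuclideanSpace ℝ (Fin d) → ℝ) (G : EuclideanSpace ℝ (Fin d) → EuclideanSpace ℝ (Fin d))
    (hG : ∀ y, HasGradientAt L (G y) y) (hGcont : Continuous G)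
    (x : EuclideanSpace ℝ (Fin d)) :
    (∃ s : ℝ, 0 ≤ s ∧ N x ≤ 1 / lam ∧
        (∃ u, SubgradientAt N x u ∧ G x + s • u = 0) ∧ s * (N x - 1 / lam) = 0) ↔
      (N x ≤ 1 / lam ∧ ⟪-(lam • x), G x⟫ = D (G x)) :=
  kkt_iff_general N D hN hD lam hlam G x
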